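/- Let $\mu, \nu$ be probability measures on a measurable space $\mathcal{X}$, let $\mathcal{Y}$ be a standard Borel space (or more generally one where disintegration applies), and let $\kappa : \mathcal{X} \rightsquigarrow \mathcal{Y}$ be a Markov kernel. Then the Kullback-Leibler divergence satisfies the data-processing inequality $\mathrm{KL}(\kappa \circ_m \mu, \kappa \circ_m \nu) \le \mathrm{KL}(\mu, \nu)$. -/

import Mathlib

open MeasureTheory ProbabilityTheory
open scoped ENNReal Classical

/-- Kullback-Leibler divergence between two measures: `KL(μ, ν) = ∫ log (dμ/dν) dμ` (a value in
`ℝ≥0∞`) if `μ` is absolutely continuous with respect to `ν` (and the integral is well defined),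
and `∞` otherwise. -/
noncomputable def klDiv {𝓧 : Type*} [MeasurableSpace 𝓧] (μ ν : Measure 𝓧) : ℝ≥0∞ :=
  if μ ≪ ν ∧ Integrable (fun x ↦ Real.log (μ.rnDeriv ν x).toReal) μ then
    ENNReal.ofReal (∫ x, Real.log (μ.rnDeriv ν x).toReal ∂μ)
  else ∞

/-- Mathlib's divergence carries the correction term `ν.real univ - μ.real univ`, which vanishes
when the total masses agree. -/
lemma klDiv_eq_informationTheory_klDiv_of_measure_univ_eq {𝓧 : Type*} [MeasurableSpace 𝓧]
    {μ ν : Measure 𝓧} (h : μ Set.univ = ν Set.univ) :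
    klDiv μ ν = InformationTheory.klDiv μ ν := by
  rw [InformationTheory.klDiv_def, klDiv, measureReal_def, measureReal_def, h, add_sub_cancel_right]
  rfl

theorem klDiv_comp_le_general
    {𝓧 𝓨 : Type*} [MeasurableSpace 𝓧] [MeasurableSpace 𝓨]
    (μ ν : Measure 𝓧) [IsProbabilityMeasure μ] [IsProbabilityMeasure ν]
    (κ : Kernel 𝓧 𝓨) [IsMarkovKernel κ] :
    klDiv (μ.bind κ) (ν.bind κ) ≤ klDiv μ ν := by
  have h_univ : μ Set.univ = ν Set.univ := by simp
  have h_univ_comp : (κ ∘ₘ μ) Set.univ = (κ ∘ₘ ν) Set.univ := by simp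
  calc klDiv (κ ∘ₘ μ) (κ ∘ₘ ν)
      = InformationTheory.klDiv (κ ∘ₘ μ) (κ ∘ₘ ν) :=
        klDiv_eq_informationTheory_klDiv_of_measure_univ_eq h_univ_comp
    _ ≤ InformationTheory.klDiv μ ν := InformationTheory.klDiv_comp_right_le μ ν κ
    _ = klDiv μ ν := (klDiv_eq_informationTheory_klDiv_of_measure_univ_eq h_univ).symm

/-- **Data-processing inequality for the Kullback-Leibler divergence.** For probability
measures `μ, ν` on `𝓧`, a standard Borel space `𝓨` and a Markov kernel `κ : 𝓧 ↝ 𝓨`,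
`KL(κ ∘ₘ μ, κ ∘ₘ ν) ≤ KL(μ, ν)`, where `κ ∘ₘ μ = μ.bind κ`. -/
theorem klDiv_comp_le
    {𝓧 𝓨 : Type*} [MeasurableSpace 𝓧] [MeasurableSpace 𝓨]
    [StandardBorelSpace 𝓨] [Nonempty 𝓨]
    (μ ν : Measure 𝓧) [IsProbabilityMeasure μ] [IsProbabilityMeasure ν]
    (κ : Kernel 𝓧 𝓨) [IsMarkovKernel κ] :
    klDiv (μ.bind κ) (ν.bind κ) ≤ klDiv μ ν :=
  klDiv_comp_le_general μ ν κ
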